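/- Let K be a field, d ≥ 1 and λ ∈ K. For every d×d matrix A over K that commutes with the Jordan block J_d(λ), either A is invertible or the matrix 1 − A (identity minus A) is invertible. Consequently, the centralizer ring {A : A·J_d(λ) = J_d(λ)·A} is a local ring. -/

import Mathlib

/-- The `d × d` Jordan block `J_d(λ)`: `λ` on the diagonal, `1` on the superdiagonal,
`0` elsewhere. -/
def Jmat (K : Type) [Field K] (d : ℕ) (lam : K) : Matrix (Fin d) (Fin d) K :=
  Matrix.of fun i j => if i = j then lam else if (j : ℕ) = (i : ℕ) + 1 then 1 else 0

lemma jordan_rel {K : Type} [Field K] {d : ℕ} {lam : K} (A : Matrix (Fin d) (Fin d) K)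
    (hA : A * Jmat K d lam = Jmat K d lam * A) (i j : Fin d) :
    (if h : (j:ℕ) ≠ 0 then A i ⟨(j:ℕ)-1, lt_of_le_of_lt (Nat.sub_le _ _) j.2⟩ else 0)
      = (if h : (i:ℕ)+1 < d then A ⟨(i:ℕ)+1, h⟩ j else 0) := by
  have h : (A * Jmat K d lam) i j = (Jmat K d lam * A) i j := by rw [hA]
  rw [Matrix.mul_apply, Matrix.mul_apply] at h
  have hL : ∑ k, A i k * Jmat K d lam k j
      = A i j * lam + (if h : (j:ℕ) ≠ 0 then
          A i ⟨(j:ℕ)-1, lt_of_le_of_lt (Nat.sub_le _ _) j.2⟩ else 0) := by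
    have e1 : ∀ k : Fin d, A i k * Jmat K d lam k j
        = (if k = j then A i j * lam else 0) + (if (j:ℕ) = (k:ℕ)+1 then A i k else 0) := by
      intro k
      simp only [Jmat, Matrix.of_apply]
      by_cases hkj : k = j
      · subst hkj
        have : ¬ ((k:ℕ) = (k:ℕ)+1) := by omega
        simp [this]
      · by_cases hc : (j:ℕ) = (k:ℕ)+1 <;> simp [hkj, hc]
    rw [Finset.sum_congr rfl (fun k _ => e1 k), Finset.sum_add_distrib,
      Finset.sum_ite_eq' Finset.univ j (fun _ => A i j * lam)]
    simp only [Finset.mem_univ, if_true]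
    congr 1
    by_cases hj : (j:ℕ) ≠ 0
    · have e2 : ∀ k : Fin d, ((j:ℕ) = (k:ℕ)+1) ↔
          (k = (⟨(j:ℕ)-1, lt_of_le_of_lt (Nat.sub_le _ _) j.2⟩ : Fin d)) := by
        intro k
        constructor
        · intro hk; apply Fin.ext; simp; omega
        · intro hk; subst hk; simp; omega
      simp_rw [e2]
      rw [Finset.sum_ite_eq' Finset.univ _ (fun k => A i k)]
      simp [hj]
    · push_neg at hj
      have : ∀ k : Fin d, ¬ ((j:ℕ) = (k:ℕ)+1) := by intro k; omega
      simp [this, hj]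
  have hR : ∑ k, Jmat K d lam i k * A k j
      = lam * A i j + (if h : (i:ℕ)+1 < d then A ⟨(i:ℕ)+1, h⟩ j else 0) := by
    have e1 : ∀ k : Fin d, Jmat K d lam i k * A k j
        = (if k = i then lam * A i j else 0) + (if (k:ℕ) = (i:ℕ)+1 then A k j else 0) := by
      intro k
      simp only [Jmat, Matrix.of_apply]
      by_cases hkj : k = i
      · subst hkj
        have : ¬ ((k:ℕ) = (k:ℕ)+1) := by omega
        simp [this]
      · have : ¬ (i = k) := fun h => hkj h.symm
        by_cases hc : (k:ℕ) = (i:ℕ)+1 <;> simp [hkj, hc, this]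
    rw [Finset.sum_congr rfl (fun k _ => e1 k), Finset.sum_add_distrib,
      Finset.sum_ite_eq' Finset.univ i (fun _ => lam * A i j)]
    simp only [Finset.mem_univ, if_true]
    congr 1
    by_cases hi : (i:ℕ)+1 < d
    · have e2 : ∀ k : Fin d, ((k:ℕ) = (i:ℕ)+1) ↔ (k = (⟨(i:ℕ)+1, hi⟩ : Fin d)) := by
        intro k; constructor
        · intro hk; exact Fin.ext hk
        · intro hk; subst hk; rfl
      simp_rw [e2]
      rw [Finset.sum_ite_eq' Finset.univ _ (fun k => A k j)]
      simp [hi]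
    · have : ∀ k : Fin d, ¬ ((k:ℕ) = (i:ℕ)+1) := by
        intro k hk; exact hi (hk ▸ k.2)
      simp [this, hi]
  rw [hL, hR, mul_comm] at h
  exact add_left_cancel h


section aux2
variable {K : Type} [Field K] {d : ℕ} {lam : K}

lemma jordan_lowzero (A : Matrix (Fin d) (Fin d) K)
    (hA : A * Jmat K d lam = Jmat K d lam * A) :
    ∀ i j : Fin d, (j:ℕ) < (i:ℕ) → A i j = 0 := by
  suffices H : ∀ n : ℕ, ∀ i j : Fin d, (j:ℕ) = n → (j:ℕ) < (i:ℕ) → A i j = 0 by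
    intro i j; exact H (j:ℕ) i j rfl
  intro n
  induction n with
  | zero =>
    intro i j hj hlt
    -- i ≥ 1, use rel with i' = i-1, j = 0
    have hi : (i:ℕ) - 1 + 1 < d := by omega
    have h := jordan_rel A hA ⟨(i:ℕ)-1, by omega⟩ j
    rw [dif_neg (by omega : ¬ (j:ℕ) ≠ 0), dif_pos hi] at h
    have : (⟨(i:ℕ)-1+1, hi⟩ : Fin d) = i := Fin.ext (by simp; omega)
    rw [this] at h
    exact h.symm
  | succ n ih =>
    intro i j hj hlt
    have hi : (i:ℕ) - 1 + 1 < d := by omega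
    have h := jordan_rel A hA ⟨(i:ℕ)-1, by omega⟩ j
    rw [dif_pos (by omega : (j:ℕ) ≠ 0), dif_pos hi] at h
    have e : (⟨(i:ℕ)-1+1, hi⟩ : Fin d) = i := Fin.ext (by simp; omega)
    rw [e] at h
    rw [← h]
    exact ih _ _ (by simp; omega) (by simp; omega)

lemma jordan_diag (hd : 1 ≤ d) (A : Matrix (Fin d) (Fin d) K)
    (hA : A * Jmat K d lam = Jmat K d lam * A) :
    ∀ i : Fin d, A i i = A ⟨0, hd⟩ ⟨0, hd⟩ := by
  suffices H : ∀ n : ℕ, ∀ i : Fin d, (i:ℕ) = n → A i i = A ⟨0, hd⟩ ⟨0, hd⟩ by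
    intro i; exact H (i:ℕ) i rfl
  intro n
  induction n with
  | zero =>
    intro i hi
    have : i = ⟨0, hd⟩ := Fin.ext (by simpa using hi)
    rw [this]
  | succ n ih =>
    intro i hi
    have hi' : (i:ℕ) - 1 + 1 < d := by omega
    have h := jordan_rel A hA ⟨(i:ℕ)-1, by omega⟩ i
    rw [dif_pos (by omega : (i:ℕ) ≠ 0), dif_pos hi'] at h
    have e : (⟨(i:ℕ)-1+1, hi'⟩ : Fin d) = i := Fin.ext (by simp; omega)
    rw [e] at h
    rw [← h]
    have e2 : (⟨(i:ℕ)-1, by omega⟩ : Fin d) = (⟨n, by omega⟩ : Fin d) := Fin.ext (by simp; omega)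
    -- goal: A ⟨i-1,_⟩ ⟨i-1,_⟩ = A 0 0, note second index is ⟨(i:ℕ)-1, lt...⟩
    have := ih ⟨n, by omega⟩ rfl
    convert this using 2 <;> exact Fin.ext (by simp; omega)

lemma jordan_det (hd : 1 ≤ d) (A : Matrix (Fin d) (Fin d) K)
    (hA : A * Jmat K d lam = Jmat K d lam * A) :
    A.det = (A ⟨0, hd⟩ ⟨0, hd⟩) ^ d := by
  have ht : A.BlockTriangular id := by
    intro i j hij
    exact jordan_lowzero A hA i j hij
  rw [Matrix.det_of_upperTriangular ht]
  rw [Finset.prod_congr rfl (fun i _ => jordan_diag hd A hA i)]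
  simp

end aux2

/-- For every `d × d` matrix `A` over a field `K` commuting with the Jordan block `J_d(λ)`,
either `A` or `1 - A` is invertible; consequently the centralizer ring
`{A : A·J_d(λ) = J_d(λ)·A}` is a local ring. -/
theorem centralizer_jordan_local (K : Type) [Field K] (d : ℕ) (hd : 1 ≤ d) (lam : K) :
    (∀ A : Matrix (Fin d) (Fin d) K, A * Jmat K d lam = Jmat K d lam * A →
      IsUnit A ∨ IsUnit (1 - A)) ∧
    IsLocalRing (Subalgebra.centralizer K ({Jmat K d lam} : Set (Matrix (Fin d) (Fin d) K))) := by
  have key : ∀ A : Matrix (Fin d) (Fin d) K, A * Jmat K d lam = Jmat K d lam * A →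
      IsUnit A ∨ IsUnit (1 - A) := by
    intro A hA
    by_cases hc : A ⟨0, hd⟩ ⟨0, hd⟩ = 0
    · right
      have hB : (1 - A) * Jmat K d lam = Jmat K d lam * (1 - A) := by
        rw [sub_mul, mul_sub, one_mul, mul_one, hA]
      rw [Matrix.isUnit_iff_isUnit_det, jordan_det hd _ hB]
      have : (1 - A) ⟨0, hd⟩ ⟨0, hd⟩ = 1 := by
        simp [Matrix.sub_apply, Matrix.one_apply_eq, hc]
      rw [this]; simp
    · left
      rw [Matrix.isUnit_iff_isUnit_det, jordan_det hd _ hA]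
      exact (isUnit_iff_ne_zero).2 (pow_ne_zero _ hc)
  refine ⟨key, ?_⟩
  haveI : Nonempty (Fin d) := ⟨⟨0, hd⟩⟩
  set S := Subalgebra.centralizer K ({Jmat K d lam} : Set (Matrix (Fin d) (Fin d) K)) with hS
  haveI : Nontrivial S := by
    refine ⟨⟨0, 1, fun h => ?_⟩⟩
    have : (0 : Matrix (Fin d) (Fin d) K) = 1 := congrArg Subtype.val h
    exact zero_ne_one this
  refine ⟨fun {x y} hxy => ?_⟩
  have hy : y = 1 - x := by rw [← hxy]; exact (add_sub_cancel_left x y).symm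
  subst hy
  set a := x with ha
  have hmem := a.2
  rw [Subalgebra.mem_centralizer_iff] at hmem
  have hcomm : (a : Matrix (Fin d) (Fin d) K) * Jmat K d lam
      = Jmat K d lam * (a : Matrix (Fin d) (Fin d) K) :=
    (hmem (Jmat K d lam) rfl).symm
  have lift : ∀ (B : Matrix (Fin d) (Fin d) K) (hB : B ∈ S), IsUnit B →
      IsUnit (⟨B, hB⟩ : S) := by
    intro B hB hu
    have hdet : IsUnit B.det := (Matrix.isUnit_iff_isUnit_det B).1 hu
    have h1 : B * B⁻¹ = 1 := Matrix.mul_nonsing_inv B hdet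
    have h2 : B⁻¹ * B = 1 := Matrix.nonsing_inv_mul B hdet
    have hBc : Jmat K d lam * B = B * Jmat K d lam := by
      rw [Subalgebra.mem_centralizer_iff] at hB
      exact hB (Jmat K d lam) rfl
    have hinvmem : B⁻¹ ∈ S := by
      rw [Subalgebra.mem_centralizer_iff]
      intro g hg
      rw [Set.mem_singleton_iff] at hg
      subst hg
      calc Jmat K d lam * B⁻¹ = B⁻¹ * (B * Jmat K d lam) * B⁻¹ := by
            rw [← mul_assoc, h2, one_mul]
        _ = B⁻¹ * (Jmat K d lam * B) * B⁻¹ := by rw [hBc]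
        _ = B⁻¹ * Jmat K d lam := by rw [mul_assoc, mul_assoc, h1, mul_one]
    exact isUnit_iff_exists.2 ⟨⟨B⁻¹, hinvmem⟩, Subtype.ext h1, Subtype.ext h2⟩
  rcases key a hcomm with h | h
  · exact Or.inl (lift a a.2 h)
  · right
    have hco : ((1 - a : S) : Matrix (Fin d) (Fin d) K)
        = 1 - (a : Matrix (Fin d) (Fin d) K) := rfl
    have := lift _ (1 - a : S).2 (by rw [hco]; exact h)
    exact this
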